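/- arXiv:1611.08580 — 3 statements merged into one kernel-verified Lean document; each statement's English description precedes it below -/
import Mathlib

section
/- For 0 < β < α and any real s, x, the difference between e^{-β(x-s)²} and the sum (α/√(π(α-β))) Σ_{k∈ℤ} e^{-(αβ/(α-β))(k-s)²} e^{-α(x-k)²} is bounded in absolute value by ε(α,β)·e^{-β(x-s)²}, where ε(α,β) = θ₃(0, e^{-(π²/α)(1-β/α)}) - 1 and θ₃(z,q) = Σ_{n∈ℤ} q^{n²} e^{2inz} is the Jacobi theta function. -/
open Real

/-!
Completing the square in `k` writes each summand as `exp (-β (x - s)²)` times the Gaussian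
`exp (-A (k - m)²)` with `A = α² / (α - β)` and `m = ((α - β) x + β s) / α`. By Poisson summation,
`√(A / π) ∑ₖ exp (-A (k - m)²) = ∑ₙ exp (-π² n² / A) cos (2π m n)`, whose `n = 0` term is `1`; the
remaining terms are bounded in absolute value by `exp (-π² n² / A)`, and
`π² / A = (π² / α) (1 - β / α)`.
-/

lemma summable_exp_neg_mul_int_sq {c : ℝ} (hc : 0 < c) :
    Summable fun n : ℤ ↦ exp (-c * n ^ 2) := by
  refine (summable_pow_mul_jacobiTheta₂_term_bound 0 (div_pos hc pi_pos) 0).congr fun n ↦ ?_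
  field_simp
  ring_nf

lemma norm_tsum_sub_le_tsum_sub {ι E : Type*} [NormedAddCommGroup E] [CompleteSpace E]
    {f : ι → E} {t : ι → ℝ} (ht : Summable t) (hft : ∀ j, ‖f j‖ ≤ t j) (i : ι) :
    ‖∑' j, f j - f i‖ ≤ ∑' j, t j - t i := by
  classical
  have hbound : ∀ j, ‖Function.update f i 0 j‖ ≤ Function.update t i 0 j := by
    intro j
    rcases eq_or_ne j i with rfl | hj
    · simp
    · simpa [hj] using hft j
  have hf : Summable f := ht.of_norm_bounded hft
  have := tsum_of_norm_bounded (ht.hasSum.update i 0) hbound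
  rwa [(hf.hasSum.update i 0).tsum_eq, zero_sub, neg_add_eq_sub, zero_sub, neg_add_eq_sub] at this

lemma sqrt_div_pi_mul_tsum_exp_neg_mul_sub_sq {A : ℝ} (hA : 0 < A) (m : ℝ) :
    √(A / π) * ∑' k : ℤ, exp (-A * (k - m) ^ 2) =
      ∑' n : ℤ, exp (-(π ^ 2 / A) * n ^ 2) * cos (2 * π * m * n) := by
  have ha : 0 < π / A := div_pos pi_pos hA
  have H := Complex.tsum_exp_neg_quadratic (a := ((π / A : ℝ) : ℂ)) (by simpa using ha)
    (Complex.I * m)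
  have hexp : ∀ n : ℤ, -π * ((π / A : ℝ) : ℂ) * n ^ 2 + 2 * π * (Complex.I * m) * n
      = ((-(π ^ 2 / A) * n ^ 2 : ℝ) : ℂ) + ((2 * π * m * n : ℝ) : ℂ) * Complex.I := by
    intro n
    push_cast
    ring
  have hgauss : ∀ n : ℤ,
      Complex.exp (-π / ((π / A : ℝ) : ℂ) * (n + Complex.I * (Complex.I * m)) ^ 2)
        = ((exp (-A * (n - m) ^ 2) : ℝ) : ℂ) := by
    intro n
    rw [← mul_assoc, Complex.I_mul_I, Complex.ofReal_exp]
    push_cast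
    field_simp
    ring_nf
  have hcoef : 1 / ((π / A : ℝ) : ℂ) ^ (1 / 2 : ℂ) = ((√(A / π) : ℝ) : ℂ) := by
    rw [show (1 / 2 : ℂ) = ((1 / 2 : ℝ) : ℂ) by norm_num, ← Complex.ofReal_cpow ha.le,
      ← Real.sqrt_eq_rpow, one_div, ← Complex.ofReal_inv, ← Real.sqrt_inv, inv_div]
  simp_rw [hexp, hgauss, hcoef, ← Complex.ofReal_tsum, ← Complex.ofReal_mul] at H
  have hsum : Summable fun n : ℤ ↦
      Complex.exp (((-(π ^ 2 / A) * n ^ 2 : ℝ) : ℂ) + ((2 * π * m * n : ℝ) : ℂ) * Complex.I) := by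
    refine (summable_exp_neg_mul_int_sq (c := π ^ 2 / A) (by positivity)).of_norm_bounded
      fun n ↦ ?_
    rw [Complex.norm_exp]
    simp only [Complex.add_re, Complex.ofReal_re, Complex.mul_I_re, Complex.ofReal_im, neg_zero,
      add_zero, le_refl]
  rw [← Complex.ofReal_re (_ * _), ← H, Complex.re_tsum hsum]
  congr 1 with n
  simp only [Complex.exp_re, Complex.add_re, Complex.add_im, Complex.ofReal_re, Complex.ofReal_im,
    Complex.mul_I_re, Complex.mul_I_im, neg_zero, add_zero, zero_add]

lemma exp_neg_mul_sq_mul_exp_neg_mul_sq {α β : ℝ} (hα : α ≠ 0) (hαβ : α - β ≠ 0) (s x k : ℝ) :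
    exp (-(α * β / (α - β)) * (k - s) ^ 2) * exp (-α * (x - k) ^ 2) =
      exp (-β * (x - s) ^ 2) *
        exp (-(α ^ 2 / (α - β)) * (k - ((α - β) * x + β * s) / α) ^ 2) := by
  rw [← exp_add, ← exp_add]
  congr 1
  field_simp
  ring

theorem gaussian_shift_approximation (α β s x : ℝ) (hβ : 0 < β) (hαβ : β < α) :
    |Real.exp (-β * (x - s)^2) -
        (α / Real.sqrt (π * (α - β))) *
          ∑' k : ℤ, Real.exp (-(α * β / (α - β)) * ((k : ℝ) - s)^2) *
            Real.exp (-α * (x - (k : ℝ))^2)| ≤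
      ((∑' n : ℤ, Real.exp (-(π^2 / α) * (1 - β / α) * (n : ℝ)^2)) - 1) *
        Real.exp (-β * (x - s)^2) := by
  have hα : 0 < α := hβ.trans hαβ
  have hd : 0 < α - β := sub_pos.mpr hαβ
  set A := α ^ 2 / (α - β)
  set m := ((α - β) * x + β * s) / α
  set E := exp (-β * (x - s) ^ 2)
  have hA : 0 < A := by positivity
  have hcoef : α / √(π * (α - β)) = √(A / π) := by
    rw [div_div, sqrt_div (sq_nonneg α), sqrt_sq hα.le, mul_comm]
  have hdecay : -(π ^ 2 / α) * (1 - β / α) = -(π ^ 2 / A) := by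
    simp only [A]
    field_simp
  simp_rw [exp_neg_mul_sq_mul_exp_neg_mul_sq hα.ne' hd.ne']
  rw [tsum_mul_left, hcoef, mul_left_comm _ E, sqrt_div_pi_mul_tsum_exp_neg_mul_sub_sq hA, hdecay]
  have hterm : ∀ n : ℤ, ‖exp (-(π ^ 2 / A) * n ^ 2) * cos (2 * π * m * n)‖ ≤
      exp (-(π ^ 2 / A) * n ^ 2) := fun n ↦ by
    rw [norm_mul, norm_of_nonneg (exp_pos _).le, norm_eq_abs]
    exact mul_le_of_le_one_right (exp_pos _).le (abs_cos_le_one _)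
  have hbound := norm_tsum_sub_le_tsum_sub (summable_exp_neg_mul_int_sq (by positivity)) hterm 0
  simp only [Int.cast_zero, mul_zero, zero_pow two_ne_zero, exp_zero, cos_zero, mul_one,
    norm_eq_abs] at hbound
  rw [abs_sub_comm, ← mul_sub_one, abs_mul, abs_of_pos (exp_pos _), mul_comm]
  exact mul_le_mul_of_nonneg_right hbound (exp_pos _).le
end

section
/- Let X ~ N(0, σ_x²) and Y ~ N(0, σ_y²) be independent Gaussian random variables with zero means. Then the PDF of Z = XY is p(t) = (1/(π σ_x σ_y)) K₀(|t|/(σ_x σ_y)) for t ≠ 0, where K₀ is the modified Bessel function of the second kind of order zero. -/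
open Real MeasureTheory

/-- Modified Bessel function of the second kind of order zero,
    K₀(z) = ∫₀^∞ e^{-z cosh u} du. -/
noncomputable def besselK0 (z : ℝ) : ℝ := ∫ u in Set.Ioi (0 : ℝ), Real.exp (-z * Real.cosh u)

theorem product_of_zero_mean_gaussians (σx σy t : ℝ) (hx : 0 < σx) (hy : 0 < σy)
    (ht : t ≠ 0) :
    (∫ x in Set.Ioi (0 : ℝ),
        (1 / (2 * π * σx * σy)) *
          (Real.exp (-x^2 / (2 * σx^2)) * Real.exp (-t^2 / (2 * σy^2 * x^2)) +
           Real.exp (-x^2 / (2 * σx^2)) * Real.exp (-t^2 / (2 * σy^2 * x^2))) * (1 / x)) =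
      (1 / (π * σx * σy)) * besselK0 (|t| / (σx * σy)) := by
  have ht' : 0 < |t| := abs_pos.mpr ht
  set z := |t| / (σx * σy) with hzdef
  have hπ : (0:ℝ) < π := Real.pi_pos
  set c := Real.sqrt (σx * |t| / σy) with hcdef
  have hqpos : 0 < σx * |t| / σy := div_pos (mul_pos hx ht') hy
  have hcpos : 0 < c := Real.sqrt_pos.mpr hqpos
  have hc2 : c ^ 2 = σx * |t| / σy := Real.sq_sqrt hqpos.le
  -- Step 1: pointwise rewrite of the integrand
  have step1 : (∫ x in Set.Ioi (0 : ℝ),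
        (1 / (2 * π * σx * σy)) *
          (Real.exp (-x^2 / (2 * σx^2)) * Real.exp (-t^2 / (2 * σy^2 * x^2)) +
           Real.exp (-x^2 / (2 * σx^2)) * Real.exp (-t^2 / (2 * σy^2 * x^2))) * (1 / x)) =
      (1 / (π * σx * σy)) * ∫ x in Set.Ioi (0 : ℝ),
        Real.exp (-x^2 / (2 * σx^2)) * Real.exp (-t^2 / (2 * σy^2 * x^2)) * (1 / x) := by
    rw [← MeasureTheory.integral_const_mul]
    congr 1
    funext x
    field_simp
    ring
  -- Step 2: change of variables x = c * exp u
  have step2 : (∫ x in Set.Ioi (0 : ℝ),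
        Real.exp (-x^2 / (2 * σx^2)) * Real.exp (-t^2 / (2 * σy^2 * x^2)) * (1 / x)) =
      ∫ u : ℝ, Real.exp (-z * Real.cosh (2 * u)) := by
    have himg : (fun u : ℝ => c * Real.exp u) '' Set.univ = Set.Ioi 0 := by
      rw [Set.image_univ]
      ext x
      simp only [Set.mem_range, Set.mem_Ioi]
      constructor
      · rintro ⟨u, rfl⟩; positivity
      · intro hx0
        exact ⟨Real.log (x / c), by
          rw [Real.exp_log (div_pos hx0 hcpos), mul_div_cancel₀ _ hcpos.ne']⟩
    have hderiv : ∀ u ∈ (Set.univ : Set ℝ),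
        HasDerivWithinAt (fun u => c * Real.exp u) (c * Real.exp u) Set.univ u :=
      fun u _ => ((Real.hasDerivAt_exp u).const_mul c).hasDerivWithinAt
    have hinj : Set.InjOn (fun u : ℝ => c * Real.exp u) Set.univ := by
      intro a _ b _ hab
      exact Real.exp_injective (mul_left_cancel₀ hcpos.ne' hab)
    have hcov := MeasureTheory.integral_image_eq_integral_abs_deriv_smul
      MeasurableSet.univ hderiv hinj
      (fun x => Real.exp (-x^2 / (2 * σx^2)) * Real.exp (-t^2 / (2 * σy^2 * x^2)) * (1 / x))
    rw [himg] at hcov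
    rw [hcov, MeasureTheory.setIntegral_univ]
    congr 1
    funext u
    have hexp : (0:ℝ) < Real.exp u := Real.exp_pos u
    have habs : |c * Real.exp u| = c * Real.exp u := abs_of_pos (mul_pos hcpos hexp)
    have he2 : Real.exp u ^ 2 = Real.exp (2 * u) := by
      rw [two_mul, Real.exp_add, sq]
    have hne2 : Real.exp (2 * u) ≠ 0 := (Real.exp_pos _).ne'
    have ht2 : t ^ 2 = |t| ^ 2 := (sq_abs t).symm
    have hA : -(c * Real.exp u) ^ 2 / (2 * σx ^ 2) = -(z / 2) * Real.exp (2 * u) := by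
      rw [mul_pow, hc2, ← he2, hzdef]
      field_simp
    have hB : -t ^ 2 / (2 * σy ^ 2 * (c * Real.exp u) ^ 2) =
        -(z / 2) * Real.exp (-(2 * u)) := by
      have h1 : Real.exp (-(2 * u)) = (Real.exp u ^ 2)⁻¹ := by
        rw [Real.exp_neg, he2]
      rw [mul_pow, hc2, h1, hzdef]
      have hEne : Real.exp u ≠ 0 := hexp.ne'
      field_simp
      rw [ht2]
    simp only [smul_eq_mul, habs, hA, hB]
    rw [Real.cosh_eq]
    have hxne : c * Real.exp u ≠ 0 := (mul_pos hcpos hexp).ne'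
    rw [← Real.exp_add]
    field_simp
    ring_nf
  -- Step 3: rescale u ↦ 2u
  have step3 : (∫ u : ℝ, Real.exp (-z * Real.cosh (2 * u))) =
      |(2:ℝ)⁻¹| • ∫ v : ℝ, Real.exp (-z * Real.cosh v) :=
    MeasureTheory.Measure.integral_comp_mul_left (fun v => Real.exp (-z * Real.cosh v)) 2
  -- Step 4: evenness
  have step4 : (∫ v : ℝ, Real.exp (-z * Real.cosh v)) = 2 * besselK0 z := by
    have h := integral_comp_abs (f := fun v => Real.exp (-z * Real.cosh v))
    calc (∫ v : ℝ, Real.exp (-z * Real.cosh v))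
        = ∫ v : ℝ, Real.exp (-z * Real.cosh |v|) := by
          simp only [Real.cosh_abs]
      _ = 2 * ∫ v in Set.Ioi (0:ℝ), Real.exp (-z * Real.cosh v) := h
      _ = 2 * besselK0 z := rfl
  rw [step1, step2, step3, step4, smul_eq_mul,
    abs_of_pos (by norm_num : (0:ℝ) < (2:ℝ)⁻¹)]
  ring
end

section
/- Define M₀(p) = ( θ₃(πp, e^{-α/8}) / (2 θ₃(2πp, e^{-α/2})) + η cos(2πp) )^{1/2} where η = 1 - θ₃(0, e^{-α/8})/(2 θ₃(0, e^{-α/2})) and α > 0. Then M₀ satisfies the exact quadrature mirror filter condition M₀²(p) + M₀²(p + 1/2) = 1 for all real p. -/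
/-!
With `γ = α/8` and `w = πp`, the half-period identity
`θ₃(w) + θ₃(w + π/2) = 2 θ₃(2w, e^{-4γ})` and `cos (2w + π) = -cos 2w` make the two radicands add
up to `1`. Writing `T = θ₃(0)` and `P = θ₃(π/2)`, the radicand at `w` is
`θ₃(w) / (θ₃(w) + θ₃(w + π/2)) + P cos 2w / (T + P)`, which is nonnegative once
`θ₃(w + π/2) P ≤ θ₃(w) T` and `θ₃ > 0`. Both facts come from the duplication formula
`θ₃(x) θ₃(y) = θ₃(x + y, e^{-2γ}) θ₃(x - y, e^{-2γ}) + θ₂(x + y, e^{-2γ}) θ₂(x - y, e^{-2γ})`: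
at `y = 0` it makes `θ₃(z) θ₃(0)` a sum of squares, and at `(w + π/2, π/2)` it turns the
inequality into `0 ≤ 2 θ₂(w, e^{-2γ})²`.
-/

open Real

/-- Jacobi theta function θ₃(z, e^{-γ}) for real z: Σ_{n∈ℤ} e^{-γ n²} cos(2nz). -/
noncomputable def theta3R (z γ : ℝ) : ℝ :=
  ∑' n : ℤ, Real.exp (-γ * (n : ℝ)^2) * Real.cos (2 * (n : ℝ) * z)

open Filter Topology

/-- Jacobi's `θ₂(z, e^{-γ})`. -/
noncomputable def theta2R (z γ : ℝ) : ℝ :=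
  ∑' n : ℤ, exp (-γ * ((n : ℝ) + 1 / 2) ^ 2) * cos ((2 * n + 1) * z)

lemma summable_exp_neg_mul_add_sq {c : ℝ} (hc : 0 < c) (r : ℝ) :
    Summable fun n : ℤ => exp (-c * ((n : ℝ) + r) ^ 2) := by
  have h := ((summable_jacobiTheta₂_term_iff (r * c / π * Complex.I) (c / π * Complex.I)).2
    (by simpa using div_pos hc pi_pos)).norm
  refine (h.mul_left (exp (-c * r ^ 2))).congr fun n => ?_
  rw [norm_jacobiTheta₂_term, ← exp_add]
  simp only [Complex.mul_I_im, Complex.div_ofReal_re, Complex.ofReal_re, Complex.mul_re,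
    Complex.ofReal_im, mul_zero, sub_zero]
  field_simp
  ring_nf

lemma summable_norm_exp_neg_mul_add_sq {c : ℝ} (hc : 0 < c) (r : ℝ) :
    Summable fun n : ℤ => ‖exp (-c * ((n : ℝ) + r) ^ 2)‖ := by
  simpa only [norm_of_nonneg (exp_pos _).le] using summable_exp_neg_mul_add_sq hc r

lemma summable_norm_mul_of_norm_le_one {ι : Type*} {a b : ι → ℝ}
    (ha : Summable fun i => ‖a i‖) (hb : ∀ i, ‖b i‖ ≤ 1) : Summable fun i => ‖a i * b i‖ :=
  ha.of_nonneg_of_le (fun _ => norm_nonneg _) fun i => by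
    simpa [norm_mul] using mul_le_mul_of_nonneg_left (hb i) (norm_nonneg (a i))

lemma summable_theta3R_term {γ : ℝ} (hγ : 0 < γ) (z : ℝ) :
    Summable fun n : ℤ => exp (-γ * (n : ℝ) ^ 2) * cos (2 * n * z) :=
  (summable_norm_mul_of_norm_le_one (by simpa using summable_norm_exp_neg_mul_add_sq hγ 0)
    fun n => (norm_eq_abs _).trans_le (abs_cos_le_one _)).of_norm

lemma tsum_mul_sin_eq_zero {ι : Type*} {a φ : ι → ℝ} (σ : Equiv.Perm ι)
    (ha : ∀ i, a (σ i) = a i) (hφ : ∀ i, φ (σ i) = -φ i) (u : ℝ) :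
    ∑' i, a i * sin (φ i * u) = 0 := by
  have h : ∑' i, a i * sin (φ i * u) = -∑' i, a i * sin (φ i * u) := by
    conv_lhs => rw [← σ.tsum_eq]
    rw [← tsum_neg]
    exact tsum_congr fun i => by rw [ha, hφ, neg_mul, sin_neg, mul_neg]
  linarith

lemma tsum_mul_cos_mul_tsum_mul_cos {ι : Type*} {a φ : ι → ℝ} (σ : Equiv.Perm ι)
    (ha : ∀ i, a (σ i) = a i) (hφ : ∀ i, φ (σ i) = -φ i) (hsum : Summable fun i => ‖a i‖)
    (u v : ℝ) :
    (∑' i, a i * cos (φ i * u)) * ∑' i, a i * cos (φ i * v) =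
      ∑' q : ι × ι, a q.1 * a q.2 * cos (φ q.1 * u + φ q.2 * v) := by
  have hcos (w : ℝ) : Summable fun i => ‖a i * cos (φ i * w)‖ :=
    summable_norm_mul_of_norm_le_one hsum fun i => (norm_eq_abs _).trans_le (abs_cos_le_one _)
  have hsin (w : ℝ) : Summable fun i => ‖a i * sin (φ i * w)‖ :=
    summable_norm_mul_of_norm_le_one hsum fun i => (norm_eq_abs _).trans_le (abs_sin_le_one _)
  calc (∑' i, a i * cos (φ i * u)) * ∑' i, a i * cos (φ i * v)
      = (∑' i, a i * cos (φ i * u)) * (∑' i, a i * cos (φ i * v)) -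
          (∑' i, a i * sin (φ i * u)) * ∑' i, a i * sin (φ i * v) := by
        rw [tsum_mul_sin_eq_zero σ ha hφ v, mul_zero, sub_zero]
    _ = ∑' q : ι × ι, (a q.1 * cos (φ q.1 * u) * (a q.2 * cos (φ q.2 * v)) -
          a q.1 * sin (φ q.1 * u) * (a q.2 * sin (φ q.2 * v))) := by
        have h1 := summable_mul_of_summable_norm (hcos u) (hcos v)
        have h2 := summable_mul_of_summable_norm (hsin u) (hsin v)
        rw [tsum_mul_tsum_of_summable_norm (hcos u) (hcos v),
          tsum_mul_tsum_of_summable_norm (hsin u) (hsin v), ← h1.tsum_sub h2]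
    _ = ∑' q : ι × ι, a q.1 * a q.2 * cos (φ q.1 * u + φ q.2 * v) := by
        refine tsum_congr fun q => ?_
        rw [cos_add]
        ring

def evenSumLattice : Set (ℤ × ℤ) := {q | (q.1 + q.2) % 2 = 0}

def equivEvenSumLattice : ℤ × ℤ ≃ evenSumLattice where
  toFun q := ⟨(q.1 + q.2, q.1 - q.2), by simp only [evenSumLattice, Set.mem_ofPred_eq]; omega⟩
  invFun q := ((q.1.1 + q.1.2) / 2, (q.1.1 - q.1.2) / 2)
  left_inv q := by ext <;> dsimp only <;> omega
  right_inv q := by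
    obtain ⟨⟨m, n⟩, hq⟩ := q
    simp only [evenSumLattice, Set.mem_ofPred_eq] at hq
    ext <;> dsimp only <;> omega

def equivOddSumLattice : ℤ × ℤ ≃ ↥evenSumLatticeᶜ where
  toFun q := ⟨(q.1 + q.2 + 1, q.1 - q.2), by
    simp only [evenSumLattice, Set.mem_compl_iff, Set.mem_ofPred_eq]; omega⟩
  invFun q := ((q.1.1 + q.1.2 - 1) / 2, (q.1.1 - q.1.2 - 1) / 2)
  left_inv q := by ext <;> dsimp only <;> omega
  right_inv q := by
    obtain ⟨⟨m, n⟩, hq⟩ := q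
    simp only [evenSumLattice, Set.mem_compl_iff, Set.mem_ofPred_eq] at hq
    ext <;> dsimp only <;> omega

lemma tsum_int_prod_split_parity {G : Type*} [NormedAddCommGroup G] [CompleteSpace G]
    {F : ℤ × ℤ → G} (hF : Summable F) :
    ∑' q, F q =
      ∑' q : ℤ × ℤ, F (q.1 + q.2, q.1 - q.2) + ∑' q : ℤ × ℤ, F (q.1 + q.2 + 1, q.1 - q.2) := by
  rw [← hF.tsum_subtype_add_tsum_subtype_compl evenSumLattice,
    ← equivEvenSumLattice.tsum_eq, ← equivOddSumLattice.tsum_eq]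
  rfl

lemma theta3R_mul_theta3R_eq_tsum {γ : ℝ} (hγ : 0 < γ) (x y : ℝ) :
    theta3R x γ * theta3R y γ = ∑' q : ℤ × ℤ,
      exp (-γ * (q.1 : ℝ) ^ 2) * exp (-γ * (q.2 : ℝ) ^ 2) * cos (2 * q.1 * x + 2 * q.2 * y) :=
  tsum_mul_cos_mul_tsum_mul_cos (a := fun n : ℤ => exp (-γ * (n : ℝ) ^ 2))
    (φ := fun n : ℤ => 2 * (n : ℝ)) (Equiv.neg ℤ) (fun n => by simp) (fun n => by simp)
    (by simpa using summable_norm_exp_neg_mul_add_sq hγ 0) x y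

lemma theta2R_mul_theta2R_eq_tsum {γ : ℝ} (hγ : 0 < γ) (x y : ℝ) :
    theta2R x γ * theta2R y γ = ∑' q : ℤ × ℤ,
      exp (-γ * ((q.1 : ℝ) + 1 / 2) ^ 2) * exp (-γ * ((q.2 : ℝ) + 1 / 2) ^ 2) *
        cos ((2 * q.1 + 1) * x + (2 * q.2 + 1) * y) :=
  tsum_mul_cos_mul_tsum_mul_cos (a := fun n : ℤ => exp (-γ * ((n : ℝ) + 1 / 2) ^ 2))
    (φ := fun n : ℤ => 2 * (n : ℝ) + 1) (Equiv.subLeft (-1))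
    (fun n => by simp only [Equiv.subLeft_apply]; push_cast; ring_nf)
    (fun n => by simp only [Equiv.subLeft_apply]; push_cast; ring)
    (summable_norm_exp_neg_mul_add_sq hγ _) x y

theorem theta3R_mul_theta3R {γ : ℝ} (hγ : 0 < γ) (x y : ℝ) :
    theta3R x γ * theta3R y γ = theta3R (x + y) (2 * γ) * theta3R (x - y) (2 * γ) +
      theta2R (x + y) (2 * γ) * theta2R (x - y) (2 * γ) := by
  -- `F` is the summand of `θ₃(x) θ₃(y)` over `ℤ²`; its parts with `m + n` even and odd are the
  -- two products on the right.
  set F : ℤ × ℤ → ℝ := fun q =>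
    exp (-γ * ((q.1 : ℝ) ^ 2 + (q.2 : ℝ) ^ 2)) * cos (2 * q.1 * x + 2 * q.2 * y) with hF
  have hθ := summable_norm_exp_neg_mul_add_sq hγ 0
  have hFsum : Summable F := by
    refine (summable_mul_of_summable_norm hθ hθ).of_norm_bounded fun q => ?_
    rw [norm_mul, norm_of_nonneg (exp_pos _).le, ← exp_add]
    simpa [mul_add] using mul_le_of_le_one_right (exp_pos _).le (abs_cos_le_one _)
  have hθθ : theta3R x γ * theta3R y γ = ∑' q, F q :=
    (theta3R_mul_theta3R_eq_tsum hγ x y).trans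
      (tsum_congr fun q => by rw [hF, ← exp_add]; ring_nf)
  have h2γ : 0 < 2 * γ := by positivity
  rw [hθθ, tsum_int_prod_split_parity hFsum, theta3R_mul_theta3R_eq_tsum h2γ,
    theta2R_mul_theta2R_eq_tsum h2γ]
  congr 1 <;> refine tsum_congr fun q => ?_ <;> simp only [hF, ← exp_add] <;> push_cast <;> ring_nf

lemma theta3R_add_pi (z γ : ℝ) : theta3R (z + π) γ = theta3R z γ :=
  tsum_congr fun n => by
    rw [show 2 * (n : ℝ) * (z + π) = 2 * n * z + n * (2 * π) by ring, cos_add_int_mul_two_pi]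

lemma theta2R_add_pi (z γ : ℝ) : theta2R (z + π) γ = -theta2R z γ := by
  rw [theta2R, theta2R, ← tsum_neg]
  refine tsum_congr fun n => ?_
  rw [show (2 * (n : ℝ) + 1) * (z + π) = (2 * n + 1) * z + ((2 * n + 1 : ℤ) : ℝ) * π by
      push_cast; ring,
    cos_add_int_mul_pi, Odd.neg_one_zpow (odd_two_mul_add_one n)]
  ring

theorem theta3R_add_theta3R_add_half_pi {γ : ℝ} (hγ : 0 < γ) (z : ℝ) :
    theta3R z γ + theta3R (z + π / 2) γ = 2 * theta3R (2 * z) (4 * γ) := by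
  rw [theta3R, theta3R, ← (summable_theta3R_term hγ z).tsum_add (summable_theta3R_term hγ _),
    theta3R, ← tsum_mul_left]
  have hshift (n : ℤ) : cos (2 * n * (z + π / 2)) = (-1) ^ n * cos (2 * n * z) := by
    rw [← cos_add_int_mul_pi]; ring_nf
  have hodd : Function.support (fun n : ℤ => exp (-γ * (n : ℝ) ^ 2) * cos (2 * n * z) +
      exp (-γ * (n : ℝ) ^ 2) * cos (2 * n * (z + π / 2))) ⊆ Set.range (2 * ·) := by
    intro n hn
    obtain ⟨m, rfl | rfl⟩ := Int.even_or_odd' n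
    · exact ⟨m, rfl⟩
    · rw [Function.mem_support, hshift, Odd.neg_one_zpow (odd_two_mul_add_one m)] at hn
      exact absurd (by ring) hn
  rw [← Function.Injective.tsum_eq (mul_right_injective₀ two_ne_zero) hodd]
  refine tsum_congr fun m => ?_
  rw [hshift, Even.neg_one_zpow (even_two_mul m)]
  push_cast
  ring_nf

lemma theta3R_zero_pos {γ : ℝ} (hγ : 0 < γ) : 0 < theta3R 0 γ := by
  refine (summable_theta3R_term hγ 0).tsum_pos (fun n => ?_) 0 ?_ <;> simp [(exp_pos _).le]

lemma theta3R_mul_theta3R_zero {γ : ℝ} (hγ : 0 < γ) (z : ℝ) :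
    theta3R z γ * theta3R 0 γ = theta3R z (2 * γ) ^ 2 + theta2R z (2 * γ) ^ 2 := by
  simpa [sq] using theta3R_mul_theta3R hγ z 0

lemma theta3R_nonneg {γ : ℝ} (hγ : 0 < γ) (z : ℝ) : 0 ≤ theta3R z γ :=
  nonneg_of_mul_nonneg_left (theta3R_mul_theta3R_zero hγ z ▸ by positivity) (theta3R_zero_pos hγ)

lemma tendsto_theta3R_atTop (z : ℝ) : Tendsto (theta3R z) atTop (𝓝 1) := by
  have hterm (n : ℤ) : Tendsto (fun γ => exp (-γ * (n : ℝ) ^ 2) * cos (2 * n * z)) atTop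
      (𝓝 (if n = 0 then 1 else 0)) := by
    split_ifs with hn
    · simp [hn]
    · have hn2 : 0 < (n : ℝ) ^ 2 := by positivity
      simpa using ((tendsto_exp_atBot.comp (tendsto_neg_atTop_atBot.comp
        (tendsto_id.atTop_mul_const hn2))).mul_const (cos (2 * n * z)))
  have hbound : ∀ᶠ γ in atTop, ∀ n : ℤ,
      ‖exp (-γ * (n : ℝ) ^ 2) * cos (2 * n * z)‖ ≤ exp (-1 * ((n : ℝ) + 0) ^ 2) := by
    filter_upwards [eventually_ge_atTop 1] with γ hγ n
    rw [norm_mul, norm_of_nonneg (exp_pos _).le, add_zero]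
    exact (mul_le_of_le_one_right (exp_pos _).le (abs_cos_le_one _)).trans
      (exp_le_exp.2 (by nlinarith [sq_nonneg (n : ℝ)]))
  have h := tendsto_tsum_of_dominated_convergence (summable_exp_neg_mul_add_sq one_pos 0)
    hterm hbound
  rwa [tsum_ite_eq] at h

lemma theta3R_pos {γ : ℝ} (hγ : 0 < γ) (z : ℝ) : 0 < theta3R z γ := by
  -- A zero at `γ` propagates to every `2ᵏ γ`, since `θ₃(z) θ₃(0)` is a sum of squares.
  by_contra! h
  have hzero (k : ℕ) : theta3R z (2 ^ k * γ) = 0 := by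
    induction k with
    | zero => simpa using le_antisymm h (theta3R_nonneg hγ z)
    | succ k ih =>
      have := theta3R_mul_theta3R_zero (by positivity : 0 < 2 ^ k * γ) z
      rw [ih, zero_mul, pow_succ, mul_comm _ 2, mul_assoc] at *
      nlinarith [sq_nonneg (theta3R z (2 * (2 ^ k * γ))), sq_nonneg (theta2R z (2 * (2 ^ k * γ)))]
  have hlim := (tendsto_theta3R_atTop z).comp
    ((tendsto_pow_atTop_atTop_of_one_lt one_lt_two).atTop_mul_const hγ)
  simp only [Function.comp_def, hzero] at hlim
  exact zero_ne_one (tendsto_nhds_unique tendsto_const_nhds hlim)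

theorem theta3R_add_half_pi_mul_le {γ : ℝ} (hγ : 0 < γ) (w : ℝ) :
    theta3R (w + π / 2) γ * theta3R (π / 2) γ ≤ theta3R w γ * theta3R 0 γ := by
  have h := theta3R_mul_theta3R hγ (w + π / 2) (π / 2)
  rw [show w + π / 2 + π / 2 = w + π by ring, add_sub_cancel_right, theta3R_add_pi,
    theta2R_add_pi] at h
  nlinarith [theta3R_mul_theta3R_zero hγ w, sq_nonneg (theta2R w (2 * γ))]

/-- `M₀(p)²` written with `γ = α/8` and `w = πp`. -/
noncomputable def m0Sq (γ w : ℝ) : ℝ :=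
  theta3R w γ / (2 * theta3R (2 * w) (4 * γ)) +
    (1 - theta3R 0 γ / (2 * theta3R 0 (4 * γ))) * cos (2 * w)

theorem m0Sq_add_m0Sq_add_half_pi {γ : ℝ} (hγ : 0 < γ) (w : ℝ) :
    m0Sq γ w + m0Sq γ (w + π / 2) = 1 := by
  have hB := (theta3R_pos (by positivity : 0 < 4 * γ) (2 * w)).ne'
  rw [m0Sq, m0Sq, mul_add, show 2 * (π / 2) = π by ring, theta3R_add_pi, cos_add_pi]
  have hsum := theta3R_add_theta3R_add_half_pi hγ w
  set A' := theta3R (w + π / 2) γ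
  field_simp
  linear_combination hsum

theorem m0Sq_nonneg {γ : ℝ} (hγ : 0 < γ) (w : ℝ) : 0 ≤ m0Sq γ w := by
  have hB := theta3R_pos (by positivity : 0 < 4 * γ) (2 * w)
  have hB0 := theta3R_zero_pos (by positivity : 0 < 4 * γ)
  have hhalf := theta3R_add_theta3R_add_half_pi hγ w
  have hhalf0 := theta3R_add_theta3R_add_half_pi hγ 0
  rw [zero_add, mul_zero] at hhalf0
  have hP := theta3R_nonneg hγ (π / 2)
  have hkey := theta3R_add_half_pi_mul_le hγ w
  have hc := neg_one_le_cos (2 * w)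
  set A' := theta3R (w + π / 2) γ
  set P := theta3R (π / 2) γ
  have hη : 1 - theta3R 0 γ / (2 * theta3R 0 (4 * γ)) = P / (2 * theta3R 0 (4 * γ)) := by
    field_simp
    linarith
  have hPc : 0 ≤ P / (2 * theta3R 0 (4 * γ)) * (1 + cos (2 * w)) :=
    mul_nonneg (by positivity) (by linarith)
  calc 0 ≤ (theta3R w γ * theta3R 0 γ - A' * P) /
        (2 * theta3R (2 * w) (4 * γ) * (2 * theta3R 0 (4 * γ))) :=
        div_nonneg (by linarith) (by positivity)
    _ = theta3R w γ / (2 * theta3R (2 * w) (4 * γ)) - P / (2 * theta3R 0 (4 * γ)) := by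
        field_simp
        linear_combination theta3R w γ * hhalf0 - P * hhalf
    _ ≤ m0Sq γ w := by
        rw [m0Sq, hη]
        linarith

theorem M0_QMF_condition (α : ℝ) (hα : 0 < α) (p : ℝ) :
    (Real.sqrt (theta3R (π * p) (α/8) / (2 * theta3R (2 * π * p) (α/2)) +
        (1 - theta3R 0 (α/8) / (2 * theta3R 0 (α/2))) * Real.cos (2 * π * p)))^2 +
      (Real.sqrt (theta3R (π * (p + 1/2)) (α/8) / (2 * theta3R (2 * π * (p + 1/2)) (α/2)) +
        (1 - theta3R 0 (α/8) / (2 * theta3R 0 (α/2))) * Real.cos (2 * π * (p + 1/2))))^2 = 1 := by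
  have hγ : 0 < α / 8 := by positivity
  have hM (q : ℝ) : m0Sq (α / 8) (π * q) = theta3R (π * q) (α/8) / (2 * theta3R (2 * π * q) (α/2)) +
      (1 - theta3R 0 (α/8) / (2 * theta3R 0 (α/2))) * Real.cos (2 * π * q) := by
    rw [m0Sq, show 4 * (α / 8) = α / 2 by ring, mul_assoc]
  rw [← hM, ← hM, sq_sqrt (m0Sq_nonneg hγ _), sq_sqrt (m0Sq_nonneg hγ _), mul_add,
    show π * (1 / 2) = π / 2 by ring]
  exact m0Sq_add_m0Sq_add_half_pi hγ _
end
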